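/- arXiv:math/0202053 — 2 statements merged into one kernel-verified Lean document; each statement's English description precedes it below -/
import Mathlib

section
/- Let K be a real quadratic field and ε a fundamental unit of norm 1. Let α_2 = √ε be a real square root and Z_4 = K(i). Then α_2 ∉ Z_4, and [K(i, ε^{1/4}) : K(i)] = 4. -/
/-!
If `√ε` lay in `K`, it would be a unit `±ε ^ k`, so `ε = ε ^ (2k)`; then `ε`, and with it every
unit of `K`, would be a root of unity, contradicting Dirichlet's unit theorem (a real quadratic
field has unit rank 1). Every element of `K(i)` is `a + b i` with `a, b ∈ K` real, so the real
number `√ε` is not in `K(i)` either. Finally, let `F = K(√ε) ⊆ ℝ`. If `β = a + b i` with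
`a, b ∈ F`, then `β² = √ε` forces `ab = 0`, so `±√ε = (c + d √ε)²` with `c, d ∈ K`; comparing
coefficients gives `c² + d² ε = 0` and `2cd = ±1`, impossible for real `c, d`. So
`β ∉ F(i) = K(i, √ε)`, and `K(i) ⊂ K(i, √ε) ⊂ K(i, β)` are two quadratic steps.
-/

open IntermediateField Polynomial NumberField NumberField.InfinitePlace Module

namespace IntermediateField

variable {F L : Type*} [Field F] [Field L] [Algebra F L] (E : IntermediateField F L) {z : L}

theorem isIntegral_of_sq_mem (hz : z ^ 2 ∈ E) : IsIntegral E z :=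
  ⟨X ^ 2 - C ⟨z ^ 2, hz⟩, monic_X_pow_sub_C _ two_ne_zero, by simp⟩

theorem exists_eq_add_mul_of_mem_sup_adjoin (hz : z ^ 2 ∈ E) {w : L}
    (hw : w ∈ E ⊔ adjoin F {z}) : ∃ a ∈ E, ∃ b ∈ E, w = a + b * z := by
  rw [← restrictScalars_adjoin_eq_sup, mem_restrictScalars, ← mem_toSubalgebra,
    adjoin_simple_toSubalgebra_of_isAlgebraic (E.isIntegral_of_sq_mem hz).isAlgebraic] at hw
  induction hw using Algebra.adjoin_induction with
  | mem x hx =>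
    rw [Set.mem_singleton_iff.1 hx]
    exact ⟨0, zero_mem E, 1, one_mem E, by ring⟩
  | algebraMap x => exact ⟨x, x.2, 0, zero_mem E, by simp⟩
  | add x y _ _ hx hy =>
    obtain ⟨a, ha, b, hb, rfl⟩ := hx
    obtain ⟨c, hc, d, hd, rfl⟩ := hy
    exact ⟨a + c, add_mem ha hc, b + d, add_mem hb hd, by ring⟩
  | mul x y _ _ hx hy =>
    obtain ⟨a, ha, b, hb, rfl⟩ := hx
    obtain ⟨c, hc, d, hd, rfl⟩ := hy
    refine ⟨a * c + b * d * z ^ 2, ?_, a * d + b * c, ?_, by ring⟩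
    · exact add_mem (mul_mem ha hc) (mul_mem (mul_mem hb hd) hz)
    · exact add_mem (mul_mem ha hd) (mul_mem hb hc)

theorem eq_zero_of_add_mul_eq_zero (hz : z ∉ E) {a b : L} (ha : a ∈ E) (hb : b ∈ E)
    (h : a + b * z = 0) : b = 0 := by
  by_contra hb0
  refine hz ?_
  rw [show z = -a / b by field_simp; linear_combination h]
  exact div_mem (neg_mem ha) hb

theorem finrank_sup_adjoin_of_sq_mem (hz : z ∉ E) (hz2 : z ^ 2 ∈ E) :
    Module.finrank F ↥(E ⊔ adjoin F {z}) = 2 * Module.finrank F E := by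
  have hint := E.isIntegral_of_sq_mem hz2
  have hdeg : (minpoly E z).natDegree = 2 := by
    refine le_antisymm ?_ ((minpoly.two_le_natDegree_iff hint).2 fun ⟨y, hy⟩ ↦ hz (hy ▸ y.2))
    have hp := monic_X_pow_sub_C (⟨z ^ 2, hz2⟩ : E) two_ne_zero
    have := minpoly.degree_le_of_ne_zero E z hp.ne_zero (by simp)
    rw [degree_X_pow_sub_C two_pos] at this
    exact natDegree_le_of_degree_le this
  rw [← restrictScalars_adjoin_eq_sup]
  change Module.finrank F E⟮z⟯ = _
  rw [← Module.finrank_mul_finrank F E E⟮z⟯, adjoin.finrank hint, hdeg, mul_comm]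

theorem finrank_sup_adjoin_of_sq_sq_mem (hz : z ∉ E) (hz2 : z ^ 2 ∈ E) {y : L}
    (hy : y ∉ E ⊔ adjoin F {z}) (hy2 : y ^ 2 = z) :
    Module.finrank F ↥(E ⊔ adjoin F {y}) = 4 * Module.finrank F E := by
  have hzy : adjoin F {z} ≤ adjoin F {y} :=
    adjoin_simple_le_iff.2 (hy2 ▸ pow_mem (mem_adjoin_simple_self F y) 2)
  have hsup : E ⊔ adjoin F {y} = E ⊔ adjoin F {z} ⊔ adjoin F {y} := by
    rw [sup_assoc, sup_eq_right.2 hzy]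
  have hy2' : y ^ 2 ∈ E ⊔ adjoin F {z} := by
    rw [hy2]; exact le_sup_right (a := E) (mem_adjoin_simple_self F z)
  rw [hsup, finrank_sup_adjoin_of_sq_mem _ hy hy2', finrank_sup_adjoin_of_sq_mem E hz hz2]
  ring

end IntermediateField

noncomputable def realSubfield : IntermediateField ℚ ℂ :=
  (Complex.ofRealAm.restrictScalars ℚ).fieldRange

theorem mem_realSubfield {z : ℂ} : z ∈ realSubfield ↔ ∃ r : ℝ, (r : ℂ) = z :=
  AlgHom.mem_fieldRange

theorem le_realSubfield_iff {E : IntermediateField ℚ ℂ} :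
    E ≤ realSubfield ↔ ∀ x : E, (x : ℂ).im = 0 := by
  refine ⟨fun hE x ↦ ?_, fun hE x hx ↦ mem_realSubfield.2 ⟨x.re, ?_⟩⟩
  · obtain ⟨r, hr⟩ := mem_realSubfield.1 (hE x.2)
    rw [← hr, Complex.ofReal_im]
  · exact Complex.conj_eq_iff_re.1 (Complex.conj_eq_iff_im.2 (hE ⟨x, hx⟩))

section RealSubfield

variable {E : IntermediateField ℚ ℂ} (hE : E ≤ realSubfield)
include hE

theorem isReal_val_of_le_realSubfield : ComplexEmbedding.IsReal (E.val : E →+* ℂ) :=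
  ComplexEmbedding.isReal_iff.2 <| RingHom.ext fun x ↦
    Complex.conj_eq_iff_im.2 (le_realSubfield_iff.1 hE x)

theorem sup_adjoin_ofReal_le_realSubfield (r : ℝ) :
    E ⊔ adjoin ℚ {(r : ℂ)} ≤ realSubfield :=
  sup_le hE (adjoin_simple_le_iff.2 (mem_realSubfield.2 ⟨r, rfl⟩))

theorem mem_of_mem_sup_adjoin_I {w : ℂ} (hw : w ∈ E ⊔ adjoin ℚ {Complex.I})
    (hwR : w ∈ realSubfield) : w ∈ E := by
  obtain ⟨a, ha, b, hb, rfl⟩ := E.exists_eq_add_mul_of_mem_sup_adjoin (by simp) hw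
  obtain ⟨x, hx⟩ := mem_realSubfield.1 hwR
  obtain ⟨b', rfl⟩ := mem_realSubfield.1 (hE hb)
  obtain ⟨a', rfl⟩ := mem_realSubfield.1 (hE ha)
  have hb' : b' = 0 := by simpa using congrArg Complex.im hx.symm
  simpa [hb'] using ha

theorem sq_ne_mul_of_mem_sup_adjoin {r : ℝ} (hr : (r : ℂ) ∉ E) (hr2 : (r : ℂ) ^ 2 ∈ E)
    {s : ℂ} (hs : s ∈ E) (hs0 : s ≠ 0) {t : ℂ} (ht : t ∈ E ⊔ adjoin ℚ {(r : ℂ)}) :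
    t ^ 2 ≠ s * r := by
  intro hts
  obtain ⟨c, hc, d, hd, rfl⟩ := E.exists_eq_add_mul_of_mem_sup_adjoin hr2 ht
  have hcd : c ^ 2 + d ^ 2 * r ^ 2 + (2 * c * d - s) * r = 0 := by linear_combination hts
  have hsum := E.eq_zero_of_add_mul_eq_zero hr
    (add_mem (pow_mem hc 2) (mul_mem (pow_mem hd 2) hr2))
    (sub_mem (mul_mem (mul_mem (ofNat_mem E 2) hc) hd) hs) hcd
  rw [hsum, zero_mul, add_zero] at hcd
  obtain ⟨c', rfl⟩ := mem_realSubfield.1 (hE hc)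
  obtain ⟨d', rfl⟩ := mem_realSubfield.1 (hE hd)
  have hr0 : r ≠ 0 := by rintro rfl; exact hr (by simp)
  have hR : c' ^ 2 + (d' * r) ^ 2 = 0 := by
    have : ((c' ^ 2 + (d' * r) ^ 2 : ℝ) : ℂ) = 0 := by push_cast; linear_combination hcd
    exact_mod_cast this
  have hd' : d' = 0 := by
    have : d' * r = 0 := by nlinarith [sq_nonneg c', sq_nonneg (d' * r)]
    simpa [hr0] using this
  subst hd'
  exact hs0 (by simpa using hsum.symm)

theorem notMem_sup_adjoin_I_of_sq_eq {r : ℝ} (hsq : ∀ t ∈ E, t ^ 2 ≠ r ∧ t ^ 2 ≠ -r) {β : ℂ}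
    (hβ : β ^ 2 = r) : β ∉ E ⊔ adjoin ℚ {Complex.I} := by
  intro hβE
  obtain ⟨a, ha, b, hb, rfl⟩ := E.exists_eq_add_mul_of_mem_sup_adjoin (by simp) hβE
  obtain ⟨A, rfl⟩ := mem_realSubfield.1 (hE ha)
  obtain ⟨B, rfl⟩ := mem_realSubfield.1 (hE hb)
  have hre : A ^ 2 - B ^ 2 = r := by simpa [sq] using congrArg Complex.re hβ
  have him : A * B + B * A = 0 := by simpa [sq] using congrArg Complex.im hβ
  rcases mul_eq_zero.1 (by linarith : A * B = 0) with rfl | rfl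
  · exact (hsq _ hb).2 (by rw [← hre]; push_cast; ring)
  · exact (hsq _ ha).1 (by rw [← hre]; push_cast; ring)

theorem notMem_sup_adjoin_ofReal_sup_adjoin_I {r : ℝ} (hr : (r : ℂ) ∉ E)
    (hr2 : (r : ℂ) ^ 2 ∈ E) {β : ℂ} (hβ : β ^ 2 = r) :
    β ∉ E ⊔ adjoin ℚ {(r : ℂ)} ⊔ adjoin ℚ {Complex.I} := by
  refine notMem_sup_adjoin_I_of_sq_eq (sup_adjoin_ofReal_le_realSubfield hE r)
    (fun t ht ↦ ⟨?_, ?_⟩) hβ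
  · simpa using sq_ne_mul_of_mem_sup_adjoin hE hr hr2 (one_mem E) one_ne_zero ht
  · simpa using sq_ne_mul_of_mem_sup_adjoin hE hr hr2 (neg_mem (one_mem E))
      (neg_ne_zero.2 one_ne_zero) ht

end RealSubfield

namespace NumberField.Units

variable {F : Type*} [Field F] [NumberField F]

theorem rank_eq_one_of_finrank_eq_two (h2 : finrank ℚ F = 2) {φ : F →+* ℂ}
    (hφ : ComplexEmbedding.IsReal φ) : rank F = 1 := by
  classical
  have : Nonempty {w : InfinitePlace F // w.IsReal} := ⟨⟨InfinitePlace.mk φ, isReal_mk_iff.2 hφ⟩⟩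
  have : 0 < nrRealPlaces F := Fintype.card_pos
  have := card_add_two_mul_card_eq_rank F
  rw [rank, card_eq_nrRealPlaces_add_nrComplexPlaces]
  omega

theorem fundSystem_notMem_torsion (i : Fin (rank F)) : fundSystem F i ∉ torsion F := by
  intro h
  obtain ⟨_, _, huniq⟩ := exist_unique_eq_mul_prod F (fundSystem F i)
  have h0 := huniq (⟨fundSystem F i, h⟩, 0) (by simp)
  have h1 := huniq (1, Pi.single i 1) (by simp [Pi.single_apply])
  simpa using congrFun (congrArg Prod.snd (h0.trans h1.symm)) i

omit [NumberField F] in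
theorem isOfFinOrder_coe_iff {u : (𝓞 F)ˣ} : IsOfFinOrder ((u : 𝓞 F) : F) ↔ IsOfFinOrder u :=
  Function.Injective.isOfFinOrder_iff (f := (algebraMap (𝓞 F) F : 𝓞 F →* F).comp (Units.coeHom _))
    fun _ _ h ↦ Units.ext (RingOfIntegers.coe_injective h)

end NumberField.Units

section GeneratesUnitsUpToSign

open NumberField.Units

variable {F : Type*} [Field F]

def GeneratesUnitsUpToSign (ε : F) : Prop :=
  ∀ u : F, IsIntegral ℤ u → IsIntegral ℤ u⁻¹ → ∃ k : ℤ, u = ε ^ k ∨ u = -ε ^ k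

variable [NumberField F] {ε : F} (hfund : GeneratesUnitsUpToSign ε) (hr : rank F ≠ 0)
include hfund hr

theorem GeneratesUnitsUpToSign.zpow_ne_one {n : ℤ} (hn : n ≠ 0) : ε ^ n ≠ 1 := by
  intro hεn
  let u := fundSystem F ⟨0, Nat.pos_of_ne_zero hr⟩
  have hinv : ((u : 𝓞 F) : F)⁻¹ = ((u⁻¹ : (𝓞 F)ˣ) : 𝓞 F) := by simp
  obtain ⟨k, hk⟩ := hfund ((u : 𝓞 F) : F) (RingOfIntegers.isIntegral_coe _)
    (by rw [hinv]; exact RingOfIntegers.isIntegral_coe _)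
  have hu : ((u : 𝓞 F) : F) ^ (2 * n) = 1 := by
    have heven : Even (2 * n) := even_two_mul n
    have hpow : (ε ^ k) ^ (2 * n) = (ε ^ n) ^ (2 * k) := by rw [← zpow_mul, ← zpow_mul]; ring_nf
    rcases hk with hk | hk <;> simp only [hk, heven.neg_zpow, hpow, hεn, one_zpow]
  exact fundSystem_notMem_torsion _
    (isOfFinOrder_coe_iff.1 (isOfFinOrder_iff_zpow_eq_one.2 ⟨2 * n, by omega, hu⟩))

theorem GeneratesUnitsUpToSign.not_isSquare (hε0 : ε ≠ 0) (hεint : IsIntegral ℤ ε)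
    (hεinv : IsIntegral ℤ ε⁻¹) : ¬IsSquare ε := by
  rintro ⟨u, hu⟩
  have hu2 : u ^ 2 = ε := by rw [hu, sq]
  obtain ⟨k, hk⟩ := hfund u (IsIntegral.of_pow two_pos (hu2 ▸ hεint))
    (IsIntegral.of_pow two_pos (by rwa [inv_pow, hu2]))
  have h2k : ε ^ (2 * k) = ε := by
    calc ε ^ (2 * k) = (ε ^ k) ^ 2 := by rw [mul_comm, zpow_mul, zpow_two, sq]
      _ = u ^ 2 := by rcases hk with hk | hk <;> simp [hk]
      _ = ε := hu2
  refine hfund.zpow_ne_one hr (n := 2 * k - 1) (by omega) ?_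
  rw [zpow_sub₀ hε0, h2k, zpow_one, div_self hε0]

end GeneratesUnitsUpToSign

/-- Let `K ⊂ ℂ` be a real quadratic field, `ε` a fundamental unit of norm 1,
`α₂ = √ε` a real square root and `β = ε^{1/4}` a fourth root with `β² = α₂`.
Then `α₂ ∉ Z₄ = K(i)` and `[K(i, β) : K(i)] = 4`. -/
theorem kummer_degree_four (K : IntermediateField ℚ ℂ)
    (hK2 : Module.finrank ℚ K = 2) (hKreal : ∀ x : K, (x : ℂ).im = 0)
    (ε : K) (hεint : IsIntegral ℤ ε) (hεinv : IsIntegral ℤ (ε⁻¹ : K))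
    (hnorm : Algebra.norm ℚ ε = 1)
    (hfund : ∀ u : K, IsIntegral ℤ u → IsIntegral ℤ (u⁻¹ : K) →
      ∃ k : ℤ, u = ε ^ k ∨ u = -ε ^ k)
    (α₂ : ℝ) (hα₂ : (α₂ : ℂ) ^ 2 = (ε : ℂ))
    (β : ℂ) (hβ : β ^ 2 = (α₂ : ℂ)) :
    (α₂ : ℂ) ∉ K ⊔ adjoin ℚ {Complex.I} ∧
    Module.finrank ℚ (K ⊔ adjoin ℚ {Complex.I, β} : IntermediateField ℚ ℂ) =
      4 * Module.finrank ℚ (K ⊔ adjoin ℚ {Complex.I} : IntermediateField ℚ ℂ) := by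
  have : FiniteDimensional ℚ K := Module.finite_of_finrank_pos (by rw [hK2]; norm_num)
  have : NumberField K := ⟨⟩
  have hKR : K ≤ realSubfield := le_realSubfield_iff.2 hKreal
  have hrank : Units.rank K ≠ 0 := by
    rw [Units.rank_eq_one_of_finrank_eq_two hK2 (isReal_val_of_le_realSubfield hKR)]
    exact one_ne_zero
  have hε0 : ε ≠ 0 := by rintro rfl; simp at hnorm
  have hα₂K : (α₂ : ℂ) ∉ K := fun h ↦ GeneratesUnitsUpToSign.not_isSquare hfund hrank hε0 hεint
    hεinv ⟨⟨α₂, h⟩, Subtype.ext (by simpa [sq] using hα₂.symm)⟩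
  have hα₂sq : (α₂ : ℂ) ^ 2 ∈ K := hα₂ ▸ ε.2
  have hα₂L : (α₂ : ℂ) ∉ K ⊔ adjoin ℚ {Complex.I} := fun h ↦
    hα₂K (mem_of_mem_sup_adjoin_I hKR h (mem_realSubfield.2 ⟨α₂, rfl⟩))
  have hβL : β ∉ K ⊔ adjoin ℚ {Complex.I} ⊔ adjoin ℚ {(α₂ : ℂ)} := by
    rw [sup_right_comm]
    exact notMem_sup_adjoin_ofReal_sup_adjoin_I hKR hα₂K hα₂sq hβ
  refine ⟨hα₂L, ?_⟩
  rw [Set.insert_eq, adjoin_union, ← sup_assoc]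
  exact finrank_sup_adjoin_of_sq_sq_mem _ hα₂L (le_sup_left (b := adjoin ℚ {Complex.I}) hα₂sq)
    hβL hβ
end

section
/- Let K, ε, K_n be as above with ε a norm-one unit in the real quadratic field K. Then log|disc(K_n/Q)| ≤ C_K · [K_n : K] · log n for all n ≥ 2, for some constant C_K depending only on K. More precisely, disc(K_n/Q) divides n^{4[K_n:K]} · disc(K/Q)^{[K_n:K]}. -/
/-!
By the tower formula for the different, `|disc E| = N(𝔇_{E/K}) · |disc K|^[E:K]`, so it suffices to
show `n² ∈ 𝔇_{E/K}`: then `N(𝔇_{E/K})` divides `N(n²) = n^(2[E:ℚ]) = n^(4[E:K])`.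
If a unit `x` generates an extension and `x ^ n = a` lies in the base ring, the minimal polynomial
`f` of `x` divides `X ^ n - a` over the integrally closed base, so `n x^(n-1) = f'(x) g(x)` lies in
the different, and hence so does `n`. This applies to `ζ` over `K` and to `α` over `K(ζ)`, and the
different is multiplicative in the tower `K ⊆ K(ζ) ⊆ E`.
-/

open Polynomial NumberField IntermediateField

section

variable (A K L : Type*) {B : Type*} [CommRing A] [Field K] [CommRing B] [Field L]
  [Algebra A K] [Algebra B L] [Algebra A B] [Algebra K L] [Algebra A L]
  [IsScalarTower A K L] [IsScalarTower A B L] [IsDomain A] [IsFractionRing A K]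
  [FiniteDimensional K L] [Algebra.IsSeparable K L] [IsIntegralClosure B A L]
  [IsIntegrallyClosed A] [IsDedekindDomain B] [Module.IsTorsionFree A B]

theorem natCast_mem_differentIdeal_of_pow_eq_algebraMap {x : B}
    (hx : Algebra.adjoin K {algebraMap B L x} = ⊤) (hunit : IsUnit x) {n : ℕ} {a : A}
    (hxa : x ^ n = algebraMap A B a) : (n : B) ∈ differentIdeal A B := by
  have hint : IsIntegral A x := IsIntegralClosure.isIntegral A L x
  obtain ⟨g, hg⟩ : minpoly A x ∣ X ^ n - C a :=
    minpoly.isIntegrallyClosed_dvd hint (by simp [hxa])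
  have hderiv : (n : B) * x ^ (n - 1) = aeval x (derivative (minpoly A x)) * aeval x g := by
    simpa [derivative_mul, derivative_X_pow] using congrArg (fun p => aeval x (derivative p)) hg
  have hmem : (n : B) * x ^ (n - 1) ∈ differentIdeal A B := by
    rw [hderiv]
    exact Ideal.mul_mem_right _ _ (aeval_derivative_mem_differentIdeal A K L x hx)
  exact (Ideal.mul_unit_mem_iff_mem _ (hunit.pow _)).mp hmem

end

attribute [local instance] FractionRing.liftAlgebra in
theorem mul_algebraMap_mem_differentIdeal {A B C : Type*} [CommRing A] [CommRing B] [CommRing C]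
    [Algebra A B] [Algebra B C] [Algebra A C] [IsScalarTower A B C] [IsDomain A]
    [IsIntegrallyClosed A] [IsDedekindDomain B] [IsDedekindDomain C]
    [Module.IsTorsionFree A B] [Module.IsTorsionFree A C] [Module.IsTorsionFree B C]
    [Module.Finite A B] [Module.Finite A C] [Module.Finite B C]
    [Algebra.IsSeparable (FractionRing A) (FractionRing C)]
    {x : B} {y : C} (hx : x ∈ differentIdeal A B) (hy : y ∈ differentIdeal B C) :
    y * algebraMap B C x ∈ differentIdeal A C := by
  rw [differentIdeal_eq_differentIdeal_mul_differentIdeal A B C]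
  exact Ideal.mul_mem_mul hy (Ideal.mem_map_of_mem _ hx)

namespace NumberField

theorem RingOfIntegers.isUnit_mk {L : Type*} [Field L] {x : L} (hx : IsIntegral ℤ x)
    (hxinv : IsIntegral ℤ x⁻¹) (hx0 : x ≠ 0) : IsUnit (⟨x, hx⟩ : 𝓞 L) :=
  .of_mul_eq_one (⟨x⁻¹, hxinv⟩ : 𝓞 L) (RingOfIntegers.ext (mul_inv_cancel₀ hx0))

variable {K L : Type*} [Field K] [NumberField K] [Field L] [NumberField L] [Algebra K L]

theorem natCast_mem_differentIdeal_of_pow_mem_range {x : L} (hx : IsIntegral ℤ x)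
    (hxinv : IsIntegral ℤ x⁻¹) (hx0 : x ≠ 0) (hgen : Algebra.adjoin K {x} = ⊤) {n : ℕ}
    (hxn : x ^ n ∈ (algebraMap K L).range) : (n : 𝓞 L) ∈ differentIdeal (𝓞 K) (𝓞 L) := by
  obtain ⟨a, ha⟩ := hxn
  have ha_int : IsIntegral ℤ a :=
    (isIntegral_algebraMap_iff (algebraMap K L).injective).mp (ha ▸ hx.pow n)
  set y : 𝓞 L := ⟨x, hx⟩
  have hy : algebraMap (𝓞 L) L y = x := rfl
  have hya : y ^ n = algebraMap (𝓞 K) (𝓞 L) ⟨a, ha_int⟩ := RingOfIntegers.ext ha.symm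
  have hygen : Algebra.adjoin K {algebraMap (𝓞 L) L y} = ⊤ := by rw [hy]; exact hgen
  exact natCast_mem_differentIdeal_of_pow_eq_algebraMap (𝓞 K) K L hygen
    (RingOfIntegers.isUnit_mk hx hxinv hx0) hya

theorem natCast_mem_differentIdeal_adjoin_primitiveRoot {ζ : L} {n : ℕ} (hn : n ≠ 0)
    (hζ : IsPrimitiveRoot ζ n) : (n : 𝓞 K⟮ζ⟯) ∈ differentIdeal (𝓞 K) (𝓞 K⟮ζ⟯) := by
  have hinj : Function.Injective (algebraMap K⟮ζ⟯ L) := (algebraMap K⟮ζ⟯ L).injective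
  have hgen : algebraMap K⟮ζ⟯ L (AdjoinSimple.gen K ζ) = ζ := AdjoinSimple.algebraMap_gen K ζ
  have hnpos := Nat.pos_of_ne_zero hn
  refine natCast_mem_differentIdeal_of_pow_mem_range
    ((isIntegral_algebraMap_iff hinj).mp (hgen ▸ hζ.isIntegral hnpos))
    ((isIntegral_algebraMap_iff hinj).mp (by rw [map_inv₀, hgen]; exact hζ.inv.isIntegral hnpos))
    (fun h => hζ.ne_zero hn (by rw [← hgen, h, map_zero]))
    (by simpa using (adjoin.powerBasis (IsIntegral.of_finite K ζ)).adjoin_gen_eq_top) ⟨1, ?_⟩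
  apply hinj
  rw [map_pow, hgen, hζ.pow_eq_one, map_one, map_one]

theorem natCast_sq_mem_differentIdeal_of_adjoin_eq_top {ζ α : L} {n : ℕ} (hn : n ≠ 0)
    (hζ : IsPrimitiveRoot ζ n) {ε : K} (hε : IsIntegral ℤ ε) (hεinv : IsIntegral ℤ ε⁻¹)
    (hε0 : ε ≠ 0) (hα : α ^ n = algebraMap K L ε) (hadj : K⟮ζ, α⟯ = ⊤) :
    ((n ^ 2 : ℤ) : 𝓞 L) ∈ differentIdeal (𝓞 K) (𝓞 L) := by
  have hnpos := Nat.pos_of_ne_zero hn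
  have hZα : K⟮ζ⟯⟮α⟯ = ⊤ := by
    apply restrictScalars_injective K
    rwa [adjoin_adjoin_left, restrictScalars_top, Set.singleton_union]
  have hα0 : α ≠ 0 := by
    rintro rfl
    exact hε0 ((algebraMap K L).injective (by rw [← hα, zero_pow hn, map_zero]))
  have hL : (n : 𝓞 L) ∈ differentIdeal (𝓞 K⟮ζ⟯) (𝓞 L) := by
    refine natCast_mem_differentIdeal_of_pow_mem_range
      (.of_pow hnpos (hα ▸ hε.map (IsScalarTower.toAlgHom ℤ K L)))
      (.of_pow hnpos (by
        rw [inv_pow, hα, ← map_inv₀]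
        exact hεinv.map (IsScalarTower.toAlgHom ℤ K L)))
      hα0 ?_ ⟨algebraMap K K⟮ζ⟯ ε, by rw [hα, ← IsScalarTower.algebraMap_apply]⟩
    rw [← adjoin_simple_toSubalgebra_of_isAlgebraic (Algebra.IsAlgebraic.isAlgebraic α), hZα,
      top_toSubalgebra]
  have := mul_algebraMap_mem_differentIdeal
    (natCast_mem_differentIdeal_adjoin_primitiveRoot (K := K) hn hζ) hL
  rwa [map_natCast, ← sq, ← Int.cast_natCast, ← Int.cast_pow] at this

theorem discr_dvd_of_intCast_mem_differentIdeal {c : ℤ}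
    (hc : (c : 𝓞 L) ∈ differentIdeal (𝓞 K) (𝓞 L)) :
    discr L ∣ c ^ Module.finrank ℚ L * discr K ^ Module.finrank K L := by
  have hnorm := Ideal.absNorm_dvd_absNorm_of_le ((Ideal.span_singleton_le_iff_mem _).mpr hc)
  rw [Ideal.absNorm_span_singleton, ← map_intCast (algebraMap ℤ (𝓞 L)), Algebra.norm_algebraMap,
    RingOfIntegers.rank, Int.natAbs_pow] at hnorm
  rw [← Int.natAbs_dvd_natAbs,
    natAbs_discr_eq_absNorm_differentIdeal_mul_natAbs_discr_pow K (𝓞 K) L (𝓞 L),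
    Int.natAbs_mul, Int.natAbs_pow, Int.natAbs_pow]
  exact Nat.mul_dvd_mul_right hnorm _

end NumberField

theorem Real.log_abs_le_of_dvd_pow_mul_pow {a d : ℤ} {n k m : ℕ} (hn : 2 ≤ n) (hd : d ≠ 0)
    (h : a ∣ (n : ℤ) ^ (k * m) * d ^ m) :
    Real.log |(a : ℝ)| ≤ (k + |Real.log (|(d : ℝ)|)| / Real.log 2) * m * Real.log n := by
  have hlog2 : 0 < Real.log 2 := Real.log_pos one_lt_two
  have hlogn : Real.log 2 ≤ Real.log n := Real.log_le_log two_pos (by exact_mod_cast hn)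
  have hne : (n : ℤ) ^ (k * m) * d ^ m ≠ 0 := by
    have : (n : ℤ) ≠ 0 := by omega
    positivity
  have ha : (a : ℝ) ≠ 0 := Int.cast_ne_zero.mpr (by rintro rfl; exact hne (zero_dvd_iff.mp h))
  have habs : |(a : ℝ)| ≤ (n : ℝ) ^ (k * m) * |(d : ℝ)| ^ m := by
    have := Int.le_of_dvd (abs_pos.mpr hne) ((abs_dvd _ _).mpr ((dvd_abs _ _).mpr h))
    rw [abs_mul, abs_pow, abs_pow] at this
    exact_mod_cast this
  have hlogd : |Real.log (|(d : ℝ)|)| ≤ |Real.log (|(d : ℝ)|)| / Real.log 2 * Real.log n := by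
    rw [div_mul_eq_mul_div, le_div_iff₀ hlog2]
    exact mul_le_mul_of_nonneg_left hlogn (abs_nonneg _)
  calc Real.log |(a : ℝ)| ≤ Real.log ((n : ℝ) ^ (k * m) * |(d : ℝ)| ^ m) :=
        Real.log_le_log (abs_pos.mpr ha) habs
    _ = k * m * Real.log n + m * Real.log |(d : ℝ)| := by
        rw [Real.log_mul (by positivity) (by positivity), Real.log_pow, Real.log_pow]
        push_cast
        ring
    _ ≤ k * m * Real.log n + m * (|Real.log (|(d : ℝ)|)| / Real.log 2 * Real.log n) := by
        gcongr
        exact (le_abs_self _).trans hlogd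
    _ = _ := by ring

theorem discr_bound_general (K : Type*) [Field K] [NumberField K]
    (hK2 : Module.finrank ℚ K = 2) :
    ∃ C : ℝ, 0 < C ∧
      ∀ (ε : K), IsIntegral ℤ ε → IsIntegral ℤ ε⁻¹ → Algebra.norm ℚ ε = 1 →
      ∀ (n : ℕ), 2 ≤ n →
      ∀ (E : Type) (_ : Field E) (_ : NumberField E) (_ : Algebra K E),
      ∀ (ζ α : E), IsPrimitiveRoot ζ n → α ^ n = algebraMap K E ε →
      IntermediateField.adjoin K {ζ, α} = ⊤ →
      (NumberField.discr E ∣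
          (n : ℤ) ^ (4 * Module.finrank K E) *
            (NumberField.discr K) ^ (Module.finrank K E)) ∧
      Real.log |(NumberField.discr E : ℝ)| ≤
        C * (Module.finrank K E) * Real.log n := by
  refine ⟨(4 : ℕ) + |Real.log (|(discr K : ℝ)|)| / Real.log 2, by positivity, ?_⟩
  intro ε hε hεinv hεnorm n hn E _ _ _ ζ α hζ hα hadj
  have hε0 : ε ≠ 0 := by
    rintro rfl
    simp at hεnorm
  have hdvd := discr_dvd_of_intCast_mem_differentIdeal
    (natCast_sq_mem_differentIdeal_of_adjoin_eq_top (by omega) hζ hε hεinv hε0 hα hadj)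
  rw [← Module.finrank_mul_finrank ℚ K E, hK2, ← pow_mul, ← mul_assoc] at hdvd
  exact ⟨hdvd, Real.log_abs_le_of_dvd_pow_mul_pow hn (discr_ne_zero K) hdvd⟩

/-- Let `K` be a real quadratic number field.  There is a constant `C_K`
depending only on `K` such that for every norm-one unit `ε` of `O_K`, every
`n ≥ 2` and every `E = K(ζ_n, ε^{1/n})`, one has
`disc(E/ℚ) ∣ n^{4[E:K]} · disc(K/ℚ)^{[E:K]}`, and hence
`log |disc(E/ℚ)| ≤ C_K · [E:K] · log n`. -/
theorem discr_bound (K : Type*) [Field K] [NumberField K]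
    (hK2 : Module.finrank ℚ K = 2) (hKreal : Nonempty (K →+* ℝ)) :
    ∃ C : ℝ, 0 < C ∧
      ∀ (ε : K), IsIntegral ℤ ε → IsIntegral ℤ ε⁻¹ → Algebra.norm ℚ ε = 1 →
      ∀ (n : ℕ), 2 ≤ n →
      ∀ (E : Type) (_ : Field E) (_ : NumberField E) (_ : Algebra K E),
      ∀ (ζ α : E), IsPrimitiveRoot ζ n → α ^ n = algebraMap K E ε →
      IntermediateField.adjoin K {ζ, α} = ⊤ →
      (NumberField.discr E ∣
          (n : ℤ) ^ (4 * Module.finrank K E) *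
            (NumberField.discr K) ^ (Module.finrank K E)) ∧
      Real.log |(NumberField.discr E : ℝ)| ≤
        C * (Module.finrank K E) * Real.log n :=
  discr_bound_general K hK2
end
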